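/- The subgroupoid of the dyadic rationals under arithmetic mean generated by {0, 2^n, 2k+1}, where n ≥ 0 and 0 < 2k+1, with 2^n < 2k+1, coincides with the set of all dyadic rationals in the interval [0, 2k+1]. -/

import Mathlib

def IsDyadic (x : ℝ) : Prop := ∃ k : ℤ, ∃ n : ℕ, x = (k : ℝ) / 2 ^ n

inductive MeanClosure (X : Set ℝ) : ℝ → Prop
  | base {x : ℝ} : x ∈ X → MeanClosure X x
  | mean {x y : ℝ} : MeanClosure X x → MeanClosure X y → MeanClosure X ((x + y) / 2)

/-!
Averaging `0, 1, K` repeatedly produces every `(b + c K) / 2^m` with `b + c ≤ 2^m`, and `1` is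
reached from `0` and `2^n` by `n` halvings. For a dyadic `x = a / 2^p < K` write `a 2^t = b + c K`
with `b < K`. The excess `K (b + c) - a 2^t = (K - 1) b < K²` fits into the margin
`K 2^(p+t) - a 2^t ≥ 2^t` once `2^t ≥ K²`, so `b + c ≤ 2^(p+t)`. Conversely, the dyadics in
`[0, K]` contain the generators (as `2^n ≤ K`) and are closed under averaging.
-/

theorem MeanClosure.mem_of_subset {X S : Set ℝ} (hXS : X ⊆ S)
    (hS : ∀ ⦃x y⦄, x ∈ S → y ∈ S → (x + y) / 2 ∈ S) {x : ℝ} (hx : MeanClosure X x) : x ∈ S := by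
  induction hx with
  | base h => exact hXS h
  | mean _ _ ihx ihy => exact hS ihx ihy

theorem IsDyadic.mean {x y : ℝ} (hx : IsDyadic x) (hy : IsDyadic y) :
    IsDyadic ((x + y) / 2) := by
  obtain ⟨a, p, rfl⟩ := hx
  obtain ⟨b, q, rfl⟩ := hy
  refine ⟨a * 2 ^ q + b * 2 ^ p, p + q + 1, ?_⟩
  push_cast
  field_simp
  ring

theorem isDyadic_natCast (k : ℕ) : IsDyadic k := ⟨k, 0, by simp⟩

theorem MeanClosure.weighted_mean {X : Set ℝ} {x y z : ℝ} (hx : MeanClosure X x)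
    (hy : MeanClosure X y) (hz : MeanClosure X z) (m : ℕ) :
    ∀ a b c : ℕ, a + b + c = 2 ^ m → MeanClosure X ((a * x + b * y + c * z) / 2 ^ m) := by
  induction m with
  | zero =>
    intro a b c habc
    obtain ⟨rfl, rfl, rfl⟩ | ⟨rfl, rfl, rfl⟩ | ⟨rfl, rfl, rfl⟩ :
        (a = 1 ∧ b = 0 ∧ c = 0) ∨ (a = 0 ∧ b = 1 ∧ c = 0) ∨ (a = 0 ∧ b = 0 ∧ c = 1) := by
      simp only [pow_zero] at habc; omega
    all_goals simpa
  | succ m ih =>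
    intro a b c habc
    -- fill the first half greedily with the weight of `x`, then of `y`, then of `z`
    obtain ⟨a₁, b₁, c₁, a₂, b₂, c₂, rfl, rfl, rfl, h₁, h₂⟩ : ∃ a₁ b₁ c₁ a₂ b₂ c₂ : ℕ,
        a = a₁ + a₂ ∧ b = b₁ + b₂ ∧ c = c₁ + c₂ ∧
          a₁ + b₁ + c₁ = 2 ^ m ∧ a₂ + b₂ + c₂ = 2 ^ m := by
      rw [pow_succ] at habc
      exact ⟨min a (2 ^ m), min b (2 ^ m - min a (2 ^ m)),
        2 ^ m - min a (2 ^ m) - min b (2 ^ m - min a (2 ^ m)), _, _, _,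
        (Nat.add_sub_of_le (min_le_left ..)).symm, (Nat.add_sub_of_le (min_le_left ..)).symm,
        (Nat.add_sub_of_le (by omega)).symm, by omega, by omega⟩
    convert (ih a₁ b₁ c₁ h₁).mean (ih a₂ b₂ c₂ h₂) using 1
    push_cast
    field_simp
    ring

theorem MeanClosure.one_of_two_pow {X : Set ℝ} {n : ℕ} (h0 : MeanClosure X 0)
    (hn : MeanClosure X (2 ^ n)) : MeanClosure X 1 := by
  convert h0.weighted_mean hn hn n (2 ^ n - 1) 1 0 (by have := Nat.one_le_two_pow (n := n); omega)
    using 1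
  simp

theorem exists_add_mul_eq_mul_two_pow {K a p : ℕ} (ha : a < K * 2 ^ p) :
    ∃ t b c : ℕ, b + c ≤ 2 ^ (p + t) ∧ b + c * K = a * 2 ^ t := by
  have hK : 0 < K := Nat.pos_of_mul_pos_right (Nat.zero_lt_of_lt ha)
  refine ⟨K * K, a * 2 ^ (K * K) % K, a * 2 ^ (K * K) / K, ?_, Nat.mod_add_div' _ _⟩
  have hT : K * K < 2 ^ (K * K) := Nat.lt_two_pow_self
  have hdiv := Nat.mod_add_div' (a * 2 ^ (K * K)) K
  have hmod := Nat.mod_lt (a * 2 ^ (K * K)) hK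
  have hmargin : (a + 1) * 2 ^ (K * K) ≤ K * 2 ^ p * 2 ^ (K * K) :=
    Nat.mul_le_mul_right _ ha
  rw [pow_add]
  nlinarith

theorem MeanClosure.of_isDyadic {X : Set ℝ} {K : ℕ} (h0 : MeanClosure X 0)
    (h1 : MeanClosure X 1) (hK : MeanClosure X K) {x : ℝ} (hx : IsDyadic x) (hx0 : 0 ≤ x)
    (hxK : x < K) : MeanClosure X x := by
  obtain ⟨a, p, rfl⟩ := hx
  have hp : (0 : ℝ) < 2 ^ p := by positivity
  lift a to ℕ using by
    have := mul_nonneg hx0 hp.le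
    rwa [div_mul_cancel₀ _ hp.ne', Int.cast_nonneg_iff] at this
  have ha : a < K * 2 ^ p := by exact_mod_cast (div_lt_iff₀ hp).mp hxK
  obtain ⟨t, b, c, hbc, hrep⟩ := exists_add_mul_eq_mul_two_pow ha
  obtain ⟨d, hd⟩ := Nat.exists_eq_add_of_le' hbc
  convert h0.weighted_mean h1 hK (p + t) d b c (by omega) using 1
  have hrep' : (b : ℝ) + c * K = a * 2 ^ t := by exact_mod_cast hrep
  rw [pow_add]
  field_simp
  linear_combination -hrep'

theorem gen_zero_pow_odd (n k : ℕ) (h : (2 : ℝ) ^ n < 2 * k + 1) :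
    {x : ℝ | MeanClosure {0, (2 : ℝ) ^ n, (2 * (k : ℝ) + 1)} x}
      = {x : ℝ | IsDyadic x ∧ 0 ≤ x ∧ x ≤ 2 * (k : ℝ) + 1} := by
  have hK : ((2 * k + 1 : ℕ) : ℝ) = 2 * (k : ℝ) + 1 := by push_cast; ring
  ext x
  constructor
  · intro hx
    refine MeanClosure.mem_of_subset ?_ ?_ hx
    · rintro x (rfl | rfl | rfl)
      · exact ⟨by exact_mod_cast isDyadic_natCast 0, le_rfl, by positivity⟩
      · exact ⟨by exact_mod_cast isDyadic_natCast (2 ^ n), by positivity, h.le⟩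
      · exact ⟨hK ▸ isDyadic_natCast _, by positivity, le_rfl⟩
    · rintro x y ⟨hx, hx0, hxK⟩ ⟨hy, hy0, hyK⟩
      exact ⟨hx.mean hy, by linarith, by linarith⟩
  · rintro ⟨hx, hx0, hxK⟩
    have h0 : MeanClosure {0, (2 : ℝ) ^ n, (2 * (k : ℝ) + 1)} 0 := .base (by simp)
    have h1 : MeanClosure {0, (2 : ℝ) ^ n, (2 * (k : ℝ) + 1)} 1 :=
      h0.one_of_two_pow (n := n) (.base (by simp))
    have hK' : MeanClosure {0, (2 : ℝ) ^ n, (2 * (k : ℝ) + 1)} ((2 * k + 1 : ℕ) : ℝ) :=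
      .base (by simp [hK])
    rcases hxK.lt_or_eq with hlt | rfl
    · exact h0.of_isDyadic h1 hK' hx hx0 (hK ▸ hlt)
    · exact hK ▸ hK'
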